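/- Let (𝔣, 𝔱, k) be a unit-speed space-form curve frame on an open interval I with data (𝔭, 𝔮, χ, κ), and assume k(t) ≠ 0 for all t ∈ I. Suppose there exists a nonzero vector 𝔯 ∈ V with B(𝔱(t) + (k(t)/2)·𝔣(t), 𝔯) = 0 for all t ∈ I. Then the curve is constrained elastic: there exist λ, μ ∈ ℝ such that k″ + (χ/2)k³ + (μ + κ)k + λ = 0 on I. -/

import Mathlib

noncomputable section

/-- `V = ℝ⁵`. -/
abbrev V : Type := Fin 5 → ℝ

/-- The symmetric bilinear form of signature (3,2) on `V`. -/
def bB (x y : V) : ℝ := x 0 * y 0 + x 1 * y 1 + x 2 * y 2 - x 3 * y 3 - x 4 * y 4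

/-- The skew-symmetric endomorphism `a ∧ b` of `V`. -/
def wedge (a b : V) : V →L[ℝ] V :=
  LinearMap.toContinuousLinearMap
    { toFun := fun x => bB a x • b - bB b x • a
      map_add' := by
        intro x y
        have h1 : bB a (x + y) = bB a x + bB a y := by simp [bB]; ring
        have h2 : bB b (x + y) = bB b x + bB b y := by simp [bB]; ring
        try dsimp only
        rw [h1, h2]; module
      map_smul' := by
        intro c x
        have h1 : bB a (c • x) = c * bB a x := by simp [bB]; ring
        have h2 : bB b (c • x) = c * bB b x := by simp [bB]; ring
        try dsimp only
        rw [h1, h2]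
        simp only [RingHom.id_apply]
        module }

/-- Membership in `C(t) = span{σ₁(t), σ₂(t)}`. -/
def memC (σ₁ σ₂ : ℝ → V) (t : ℝ) (x : V) : Prop :=
  ∃ a b : ℝ, x = a • σ₁ t + b • σ₂ t

/-- A Legendre curve frame on an open interval `I`. -/
structure LegendreCurveFrame (I : Set ℝ) (σ₁ σ₂ : ℝ → V) : Prop where
  isOpen : IsOpen I
  ordConn : I.OrdConnected
  smooth₁ : ContDiffOn ℝ (⊤ : ℕ∞) σ₁ I
  smooth₂ : ContDiffOn ℝ (⊤ : ℕ∞) σ₂ I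
  indep : ∀ t ∈ I, ∀ a b : ℝ, a • σ₁ t + b • σ₂ t = 0 → a = 0 ∧ b = 0
  iso₁₁ : ∀ t ∈ I, bB (σ₁ t) (σ₁ t) = 0
  iso₁₂ : ∀ t ∈ I, bB (σ₁ t) (σ₂ t) = 0
  iso₂₂ : ∀ t ∈ I, bB (σ₂ t) (σ₂ t) = 0
  d₁₁ : ∀ t ∈ I, bB (deriv σ₁ t) (σ₁ t) = 0
  d₁₂ : ∀ t ∈ I, bB (deriv σ₁ t) (σ₂ t) = 0
  d₂₁ : ∀ t ∈ I, bB (deriv σ₂ t) (σ₁ t) = 0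
  d₂₂ : ∀ t ∈ I, bB (deriv σ₂ t) (σ₂ t) = 0
  rank3 : ∀ t ∈ I,
    Module.finrank ℝ
      ↥(Submodule.span ℝ ({σ₁ t, σ₂ t, deriv σ₁ t, deriv σ₂ t} : Set V)) = 3

/-- The curve `C` is circular. -/
def Circular (I : Set ℝ) (σ₁ σ₂ : ℝ → V) : Prop :=
  ∃ v : V, v ≠ 0 ∧ ∀ t ∈ I, memC σ₁ σ₂ t v

/-- `ξ(t)` is a sum of endomorphisms `a ∧ b` with `a ∈ C(t)` and `b ∈ C(t)^⊥`. -/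
def PolarForm (I : Set ℝ) (σ₁ σ₂ : ℝ → V) (ξ : ℝ → V →L[ℝ] V) : Prop :=
  ∀ t ∈ I, ∃ b₁ b₂ : V,
    bB b₁ (σ₁ t) = 0 ∧ bB b₁ (σ₂ t) = 0 ∧ bB b₂ (σ₁ t) = 0 ∧ bB b₂ (σ₂ t) = 0 ∧
    ξ t = wedge (σ₁ t) b₁ + wedge (σ₂ t) b₂

/-- `Q` represents the quadratic differential of `ξ`. -/
def IsQuadDiff (I : Set ℝ) (σ₁ σ₂ : ℝ → V) (ξ : ℝ → V →L[ℝ] V) (Q : ℝ → ℝ) : Prop :=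
  ∀ t ∈ I, ∃ a b c d : ℝ,
    ξ t (deriv σ₁ t) = a • σ₁ t + b • σ₂ t ∧
    ξ t (deriv σ₂ t) = c • σ₁ t + d • σ₂ t ∧
    Q t = a + d

/-- `ξ` is a polarisation of the curve `C`. -/
def IsPolarisation (I : Set ℝ) (σ₁ σ₂ : ℝ → V) (ξ : ℝ → V →L[ℝ] V) : Prop :=
  ContDiffOn ℝ (⊤ : ℕ∞) ξ I ∧ PolarForm I σ₁ σ₂ ξ ∧
  ∃ Q : ℝ → ℝ, IsQuadDiff I σ₁ σ₂ ξ Q ∧ ∃ t ∈ I, Q t ≠ 0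

/-- `(p₀, p₁)` is a linear conserved quantity of `d + tξ`. -/
def IsLCQ (I : Set ℝ) (σ₁ σ₂ : ℝ → V) (ξ : ℝ → V →L[ℝ] V) (p₀ : V) (p₁ : ℝ → V) : Prop :=
  ContDiffOn ℝ (⊤ : ℕ∞) p₁ I ∧
  (∀ t ∈ I, memC σ₁ σ₂ t (p₁ t)) ∧
  ∀ t ∈ I, deriv p₁ t + ξ t p₀ = 0


/-- A unit-speed space-form curve frame with data `(p, q, χ, κ)`:
`f` is the light-cone lift of a unit-speed curve of geodesic curvature `k` in the
2-dimensional space form of constant curvature `κ`, and `tf` its tangent congruence. -/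
structure SpaceFormFrame (I : Set ℝ) (p q : V) (χ κ : ℝ)
    (f tf : ℝ → V) (k : ℝ → ℝ) : Prop where
  isOpen : IsOpen I
  ordConn : I.OrdConnected
  hχ : χ = 1 ∨ χ = -1
  hq0 : q ≠ 0
  hpp : bB p p = -χ
  hqq : bB q q = -κ
  hpq : bB p q = 0
  smoothf : ContDiffOn ℝ (⊤ : ℕ∞) f I
  smootht : ContDiffOn ℝ (⊤ : ℕ∞) tf I
  smoothk : ContDiffOn ℝ (⊤ : ℕ∞) k I
  hff : ∀ s ∈ I, bB (f s) (f s) = 0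
  htt : ∀ s ∈ I, bB (tf s) (tf s) = 0
  hft : ∀ s ∈ I, bB (f s) (tf s) = 0
  hfq : ∀ s ∈ I, bB (f s) q = -1
  hfp : ∀ s ∈ I, bB (f s) p = 0
  htp : ∀ s ∈ I, bB (tf s) p = -1
  htq : ∀ s ∈ I, bB (tf s) q = 0
  hunit : ∀ s ∈ I, bB (deriv f s) (deriv f s) = 1
  htang : ∀ s ∈ I, deriv tf s = -(k s) • deriv f s

lemma bB_symm (x y : V) : bB x y = bB y x := by simp [bB]; ring

lemma bB_add_left (x y z : V) : bB (x + y) z = bB x z + bB y z := by simp [bB]; ring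

lemma bB_smul_left (c : ℝ) (x z : V) : bB (c • x) z = c * bB x z := by simp [bB]; ring

lemma bB_zero_left (z : V) : bB 0 z = 0 := by simp [bB]

lemma bB_zero_right (z : V) : bB z 0 = 0 := by simp [bB]

lemma HasDerivAt.bB' {u v : ℝ → V} {u' v' : V} {t : ℝ}
    (hu : HasDerivAt u u' t) (hv : HasDerivAt v v' t) :
    HasDerivAt (fun s => bB (u s) (v s)) (bB u' (v t) + bB (u t) v') t := by
  have hui := hasDerivAt_pi.1 hu
  have hvi := hasDerivAt_pi.1 hv
  have h := (((((hui 0).mul (hvi 0)).add ((hui 1).mul (hvi 1))).add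
      ((hui 2).mul (hvi 2))).sub ((hui 3).mul (hvi 3))).sub ((hui 4).mul (hvi 4))
  refine HasDerivAt.congr_deriv (h.congr_of_eventuallyEq (Filter.Eventually.of_forall fun s => ?_)) ?_
  · simp only [bB, Pi.mul_apply, Pi.add_apply, Pi.sub_apply]
  · simp only [bB]; ring

lemma perp_frame_zero (χ κ : ℝ) (v0 v1 v2 v3 v4 w : V)
    (h00 : bB v0 v0 = 0) (h01 : bB v0 v1 = 0) (h02 : bB v0 v2 = 0)
    (h03 : bB v0 v3 = 0) (h04 : bB v0 v4 = -1)
    (h11 : bB v1 v1 = 0) (h12 : bB v1 v2 = 0) (h13 : bB v1 v3 = -1) (h14 : bB v1 v4 = 0)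
    (h22 : bB v2 v2 = 1) (h23 : bB v2 v3 = 0) (h24 : bB v2 v4 = 0)
    (h33 : bB v3 v3 = -χ) (h34 : bB v3 v4 = 0) (h44 : bB v4 v4 = -κ)
    (hw0 : bB w v0 = 0) (hw1 : bB w v1 = 0) (hw2 : bB w v2 = 0)
    (hw3 : bB w v3 = 0) (hw4 : bB w v4 = 0) : w = 0 := by
  set M : Fin 5 → V := ![v0, v1, v2, v3, v4] with hM
  have hpair : ∀ (g : Fin 5 → ℝ) (u : V), bB (∑ i, g i • M i) u
      = g 0 * bB v0 u + g 1 * bB v1 u + g 2 * bB v2 u + g 3 * bB v3 u + g 4 * bB v4 u := by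
    intro g u
    rw [Fin.sum_univ_five]
    simp [hM, bB_add_left, bB_smul_left]
  have hind : LinearIndependent ℝ M := by
    rw [Fintype.linearIndependent_iff]
    intro g hg
    have e0 := hpair g v0; rw [hg, bB_zero_left] at e0
    have e1 := hpair g v1; rw [hg, bB_zero_left] at e1
    have e2 := hpair g v2; rw [hg, bB_zero_left] at e2
    have e3 := hpair g v3; rw [hg, bB_zero_left] at e3
    have e4 := hpair g v4; rw [hg, bB_zero_left] at e4
    rw [h00, bB_symm v1 v0, h01, bB_symm v2 v0, h02, bB_symm v3 v0, h03,
      bB_symm v4 v0, h04] at e0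
    rw [h01, h11, bB_symm v2 v1, h12, bB_symm v3 v1, h13, bB_symm v4 v1, h14] at e1
    rw [h02, h12, h22, bB_symm v3 v2, h23, bB_symm v4 v2, h24] at e2
    rw [h03, h13, h23, h33, bB_symm v4 v3, h34] at e3
    rw [h04, h14, h24, h34, h44] at e4
    have hg2 : g 2 = 0 := by linarith
    have hg4 : g 4 = 0 := by linarith
    have hg3 : g 3 = 0 := by linarith
    have hg1 : g 1 = 0 := by linear_combination e3 - χ * hg3
    have hg0 : g 0 = 0 := by linear_combination e4 - κ * hg4
    intro i; fin_cases i <;> assumption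
  have hcard : Fintype.card (Fin 5) = Module.finrank ℝ V := by
    simp [Module.finrank_fintype_fun_eq_card]
  have hspan := hind.span_eq_top_of_card_eq_finrank hcard
  have hx : ∀ x : V, bB w x = 0 := by
    intro x
    have hx' : x ∈ Submodule.span ℝ (Set.range M) := by rw [hspan]; trivial
    rw [Submodule.mem_span_range_iff_exists_fun] at hx'
    obtain ⟨g, hg⟩ := hx'
    rw [← hg, bB_symm, hpair]
    rw [bB_symm v0 w, bB_symm v1 w, bB_symm v2 w, bB_symm v3 w, bB_symm v4 w,
      hw0, hw1, hw2, hw3, hw4]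
    ring
  funext i
  fin_cases i <;>
    [have := hx (Pi.single 0 1); have := hx (Pi.single 1 1); have := hx (Pi.single 2 1);
     have := hx (Pi.single 3 1); have := hx (Pi.single 4 1)] <;>
    · simp [bB, Pi.single_apply] at this
      simpa using this

lemma bB_smul_right (c : ℝ) (x z : V) : bB x (c • z) = c * bB x z := by simp [bB]; ring

/-- if the enveloped circle congruence `𝔱 + (k/2)𝔣` lies in a fixed linear
circle complex, then the curve is constrained elastic. -/
theorem stmt10 (I : Set ℝ) (p q : V) (χ κ : ℝ) (f tf : ℝ → V) (k : ℝ → ℝ)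
    (h : SpaceFormFrame I p q χ κ f tf k)
    (hk : ∀ s ∈ I, k s ≠ 0)
    (r : V) (hr0 : r ≠ 0)
    (hr : ∀ s ∈ I, bB (tf s + (k s / 2) • f s) r = 0) :
    ∃ lam mu : ℝ, ∀ s ∈ I,
      deriv (deriv k) s + χ / 2 * (k s) ^ 3 + (mu + κ) * k s + lam = 0 := by
  classical
  rcases I.eq_empty_or_nonempty with hIe | ⟨t₀, ht₀⟩
  · exact ⟨0, 0, fun s hs => by rw [hIe] at hs; exact absurd hs (Set.notMem_empty s)⟩
  have hIo := h.isOpen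
  have hdiff : ∀ (g : ℝ → V), ContDiffOn ℝ (⊤ : ℕ∞) g I →
      ∀ t ∈ I, HasDerivAt g (deriv g t) t := by
    intro g hg t ht
    exact ((hg.differentiableOn (by simp)).differentiableAt (hIo.mem_nhds ht)).hasDerivAt
  have hdiffR : ∀ (g : ℝ → ℝ), ContDiffOn ℝ (⊤ : ℕ∞) g I →
      ∀ t ∈ I, HasDerivAt g (deriv g t) t := by
    intro g hg t ht
    exact ((hg.differentiableOn (by simp)).differentiableAt (hIo.mem_nhds ht)).hasDerivAt
  have hf'sm : ContDiffOn ℝ (⊤ : ℕ∞) (deriv f) I :=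
    ((contDiffOn_infty_iff_deriv_of_isOpen hIo).1 h.smoothf).2
  have hk'sm : ContDiffOn ℝ (⊤ : ℕ∞) (deriv k) I :=
    ((contDiffOn_infty_iff_deriv_of_isOpen hIo).1 h.smoothk).2
  have hconstd : ∀ (g : ℝ → ℝ) (c d : ℝ) (t : ℝ), t ∈ I → (∀ s ∈ I, g s = c) →
      HasDerivAt g d t → d = 0 := by
    intro g c d t ht hg hd
    have he : g =ᶠ[nhds t] fun _ => c := Filter.eventually_of_mem (hIo.mem_nhds ht) hg
    rw [← hd.deriv, he.deriv_eq, deriv_const]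
  have hconstdV : ∀ (g : ℝ → V) (c d : V) (t : ℝ), t ∈ I → (∀ s ∈ I, g s = c) →
      HasDerivAt g d t → d = 0 := by
    intro g c d t ht hg hd
    have he : g =ᶠ[nhds t] fun _ => c := Filter.eventually_of_mem (hIo.mem_nhds ht) hg
    rw [← hd.deriv, he.deriv_eq, deriv_const]
  have hfd : ∀ t ∈ I, HasDerivAt f (deriv f t) t := hdiff f h.smoothf
  have htfd : ∀ t ∈ I, HasDerivAt tf (deriv tf t) t := hdiff tf h.smootht
  have hf'd : ∀ t ∈ I, HasDerivAt (deriv f) (deriv (deriv f) t) t := hdiff _ hf'sm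
  have hkd : ∀ t ∈ I, HasDerivAt k (deriv k t) t := hdiffR k h.smoothk
  have hk'd : ∀ t ∈ I, HasDerivAt (deriv k) (deriv (deriv k) t) t := hdiffR _ hk'sm
  -- Stage A : first derivative orthogonality relations
  have hA1 : ∀ t ∈ I, bB (deriv f t) (f t) = 0 := by
    intro t ht
    have h0 := hconstd _ 0 _ t ht h.hff ((hfd t ht).bB' (hfd t ht))
    have hs := bB_symm (f t) (deriv f t)
    linarith
  have hA2 : ∀ t ∈ I, bB (deriv f t) q = 0 := by
    intro t ht
    have h0 := hconstd _ (-1) _ t ht h.hfq ((hfd t ht).bB' (hasDerivAt_const t q))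
    rw [bB_zero_right] at h0
    linarith
  have hA3 : ∀ t ∈ I, bB (deriv f t) p = 0 := by
    intro t ht
    have h0 := hconstd _ 0 _ t ht h.hfp ((hfd t ht).bB' (hasDerivAt_const t p))
    rw [bB_zero_right] at h0
    linarith
  have hA4 : ∀ t ∈ I, bB (deriv f t) (tf t) = 0 := by
    intro t ht
    have h0 := hconstd _ 0 _ t ht h.hft ((hfd t ht).bB' (htfd t ht))
    rw [h.htang t ht, bB_smul_right] at h0
    have hs := (bB_symm (f t) (deriv f t)).trans (hA1 t ht)
    rw [hs] at h0
    linarith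
  -- Stage B : second derivative relations
  have hB1 : ∀ t ∈ I, bB (deriv (deriv f) t) (f t) = -1 := by
    intro t ht
    have h0 := hconstd _ 0 _ t ht hA1 ((hf'd t ht).bB' (hfd t ht))
    have hu := h.hunit t ht
    linarith
  have hB2 : ∀ t ∈ I, bB (deriv (deriv f) t) (tf t) = k t := by
    intro t ht
    have h0 := hconstd _ 0 _ t ht hA4 ((hf'd t ht).bB' (htfd t ht))
    rw [h.htang t ht, bB_smul_right, h.hunit t ht] at h0
    linarith
  have hB3 : ∀ t ∈ I, bB (deriv (deriv f) t) (deriv f t) = 0 := by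
    intro t ht
    have h0 := hconstd _ 1 _ t ht h.hunit ((hf'd t ht).bB' (hf'd t ht))
    have hs := bB_symm (deriv f t) (deriv (deriv f) t)
    linarith
  have hB4 : ∀ t ∈ I, bB (deriv (deriv f) t) p = 0 := by
    intro t ht
    have h0 := hconstd _ 0 _ t ht hA3 ((hf'd t ht).bB' (hasDerivAt_const t p))
    rw [bB_zero_right] at h0
    linarith
  have hB5 : ∀ t ∈ I, bB (deriv (deriv f) t) q = 0 := by
    intro t ht
    have h0 := hconstd _ 0 _ t ht hA2 ((hf'd t ht).bB' (hasDerivAt_const t q))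
    rw [bB_zero_right] at h0
    linarith
  -- Stage C : the structure equation for f''
  have hC : ∀ t ∈ I, bB (deriv (deriv f) t) r
      = -κ * bB (f t) r + χ * k t * bB (tf t) r - k t * bB p r + bB q r := by
    intro t ht
    set w : V := deriv (deriv f) t + κ • f t + (-(χ * k t)) • tf t + k t • p + (-1 : ℝ) • q
      with hw
    have hsymm : ∀ u : V, bB w u = bB (deriv (deriv f) t) u + κ * bB (f t) u
        + (-(χ * k t)) * bB (tf t) u + k t * bB p u + (-1) * bB q u := by
      intro u
      rw [hw, bB_add_left, bB_add_left, bB_add_left, bB_add_left,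
        bB_smul_left, bB_smul_left, bB_smul_left, bB_smul_left]
    have stf : bB (tf t) (f t) = 0 := (bB_symm _ _).trans (h.hft t ht)
    have spf : bB p (f t) = 0 := (bB_symm _ _).trans (h.hfp t ht)
    have sqf : bB q (f t) = -1 := (bB_symm _ _).trans (h.hfq t ht)
    have sft' : bB (f t) (deriv f t) = 0 := (bB_symm _ _).trans (hA1 t ht)
    have stf' : bB (tf t) (deriv f t) = 0 := (bB_symm _ _).trans (hA4 t ht)
    have spt : bB p (tf t) = -1 := (bB_symm _ _).trans (h.htp t ht)
    have sqt : bB q (tf t) = 0 := (bB_symm _ _).trans (h.htq t ht)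
    have spf' : bB p (deriv f t) = 0 := (bB_symm _ _).trans (hA3 t ht)
    have sqf' : bB q (deriv f t) = 0 := (bB_symm _ _).trans (hA2 t ht)
    have sqp : bB q p = 0 := (bB_symm _ _).trans h.hpq
    have hw0 : bB w (f t) = 0 := by
      rw [hsymm, hB1 t ht, h.hff t ht, stf, spf, sqf]; ring
    have hw1 : bB w (tf t) = 0 := by
      rw [hsymm, hB2 t ht, h.hft t ht, h.htt t ht, spt, sqt]; ring
    have hw2 : bB w (deriv f t) = 0 := by
      rw [hsymm, hB3 t ht, sft', stf', spf', sqf']; ring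
    have hw3 : bB w p = 0 := by
      rw [hsymm, hB4 t ht, h.hfp t ht, h.htp t ht, h.hpp, sqp]; ring
    have hw4 : bB w q = 0 := by
      rw [hsymm, hB5 t ht, h.hfq t ht, h.htq t ht, h.hpq, h.hqq]; ring
    have hwz : w = 0 := perp_frame_zero χ κ (f t) (tf t) (deriv f t) p q w
      (h.hff t ht) (h.hft t ht) sft' (h.hfp t ht) (h.hfq t ht)
      (h.htt t ht) stf' (h.htp t ht) (h.htq t ht)
      (h.hunit t ht) (hA3 t ht) (hA2 t ht) h.hpp h.hpq h.hqq
      hw0 hw1 hw2 hw3 hw4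
    have hpr := hsymm r
    rw [hwz, bB_zero_left] at hpr
    linear_combination -hpr
  -- Stage D : scalar quantities
  have ha : ∀ t ∈ I, HasDerivAt (fun s => bB (f s) r) (bB (deriv f t) r) t := by
    intro t ht
    simpa [bB_zero_right] using (hfd t ht).bB' (hasDerivAt_const t r)
  have hcd : ∀ t ∈ I, HasDerivAt (fun s => bB (deriv f s) r) (bB (deriv (deriv f) t) r) t := by
    intro t ht
    simpa [bB_zero_right] using (hf'd t ht).bB' (hasDerivAt_const t r)
  have hbd : ∀ t ∈ I, HasDerivAt (fun s => bB (tf s) r) (-(k t) * bB (deriv f t) r) t := by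
    intro t ht
    have hd := (htfd t ht).bB' (hasDerivAt_const t r)
    rw [bB_zero_right, add_zero, h.htang t ht, bB_smul_left] at hd
    exact hd
  have hab : ∀ s ∈ I, bB (tf s) r + k s / 2 * bB (f s) r = 0 := by
    intro s hs
    have h0 := hr s hs
    rw [bB_add_left, bB_smul_left] at h0
    exact h0
  have hkc : ∀ t ∈ I, k t * bB (deriv f t) r = deriv k t * bB (f t) r := by
    intro t ht
    have hg : HasDerivAt (fun s => bB (tf s) r + k s / 2 * bB (f s) r)
        (-(k t) * bB (deriv f t) r
          + (deriv k t / 2 * bB (f t) r + k t / 2 * bB (deriv f t) r)) t :=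
      (hbd t ht).add (((hkd t ht).div_const 2).mul (ha t ht))
    have h0 := hconstd _ 0 _ t ht hab hg
    linear_combination (-2 : ℝ) * h0
  -- a/k is constant on I
  have hφd : ∀ t ∈ I, HasDerivAt (fun s => bB (f s) r / k s) 0 t := by
    intro t ht
    have hd := (ha t ht).div (hkd t ht) (hk t ht)
    have hnum : bB (deriv f t) r * k t - bB (f t) r * deriv k t = 0 := by
      linear_combination hkc t ht
    rw [hnum, zero_div] at hd
    exact hd
  have hconv : Convex ℝ I := h.ordConn.convex
  have hφdiff : DifferentiableOn ℝ (fun s => bB (f s) r / k s) I :=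
    fun t ht => ((hφd t ht).differentiableAt).differentiableWithinAt
  have hφf : ∀ t ∈ I, fderivWithin ℝ (fun s => bB (f s) r / k s) I t = 0 := by
    intro t ht
    rw [fderivWithin_of_isOpen hIo ht]
    rw [(hasDerivAt_iff_hasFDerivAt.1 (hφd t ht)).fderiv]
    ext
    simp
  have haC : ∀ s ∈ I, bB (f s) r = bB (f t₀) r / k t₀ * k s := by
    intro s hs
    have hcst : bB (f s) r / k s = bB (f t₀) r / k t₀ :=
      hconv.is_const_of_fderivWithin_eq_zero hφdiff hφf hs ht₀
    rw [div_eq_iff (hk s hs)] at hcst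
    exact hcst
  -- the main second-order identity
  have hfinal : ∀ t ∈ I, k t * (-κ * bB (f t) r + χ * k t * bB (tf t) r
      - k t * bB p r + bB q r) - deriv (deriv k) t * bB (f t) r = 0 := by
    intro t ht
    have hgd : HasDerivAt (fun s => k s * bB (deriv f s) r - deriv k s * bB (f s) r)
        ((deriv k t * bB (deriv f t) r + k t * bB (deriv (deriv f) t) r)
          - (deriv (deriv k) t * bB (f t) r + deriv k t * bB (deriv f t) r)) t :=
      ((hkd t ht).mul (hcd t ht)).sub ((hk'd t ht).mul (ha t ht))
    have h0 := hconstd _ 0 _ t ht (fun s hs => by linear_combination hkc s hs) hgd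
    have h1 : k t * bB (deriv (deriv f) t) r - deriv (deriv k) t * bB (f t) r = 0 := by
      linear_combination h0
    rw [hC t ht] at h1
    exact h1
  obtain ⟨C, hCdef⟩ : ∃ C : ℝ, C = bB (f t₀) r / k t₀ := ⟨_, rfl⟩
  have haC' : ∀ s ∈ I, bB (f s) r = C * k s := by
    intro s hs
    rw [hCdef]
    exact haC s hs
  rcases eq_or_ne C 0 with hCz | hCz
  · -- degenerate case : a ≡ 0, the curve has constant curvature
    have haz : ∀ s ∈ I, bB (f s) r = 0 := fun s hs => by rw [haC' s hs, hCz, zero_mul]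
    have hbz : ∀ s ∈ I, bB (tf s) r = 0 := by
      intro s hs
      have h0 := hab s hs
      rw [haz s hs] at h0
      linarith
    have hcz : ∀ s ∈ I, bB (deriv f s) r = 0 := by
      intro s hs
      have h0 := hkc s hs
      rw [haz s hs, mul_zero] at h0
      exact (mul_eq_zero.1 h0).resolve_left (hk s hs)
    have hrw : ∀ s ∈ I, r + bB q r • f s + bB p r • tf s = 0 := by
      intro s hs
      have hsymm : ∀ u : V, bB (r + bB q r • f s + bB p r • tf s) u
          = bB r u + bB q r * bB (f s) u + bB p r * bB (tf s) u := by
        intro u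
        rw [bB_add_left, bB_add_left, bB_smul_left, bB_smul_left]
      have srf : bB r (f s) = 0 := (bB_symm _ _).trans (haz s hs)
      have srt : bB r (tf s) = 0 := (bB_symm _ _).trans (hbz s hs)
      have srf' : bB r (deriv f s) = 0 := (bB_symm _ _).trans (hcz s hs)
      have srp : bB r p = (bB p r) := bB_symm _ _
      have srq : bB r q = (bB q r) := bB_symm _ _
      have stf : bB (tf s) (f s) = 0 := (bB_symm _ _).trans (h.hft s hs)
      have sft' : bB (f s) (deriv f s) = 0 := (bB_symm _ _).trans (hA1 s hs)
      have stf' : bB (tf s) (deriv f s) = 0 := (bB_symm _ _).trans (hA4 s hs)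
      apply perp_frame_zero χ κ (f s) (tf s) (deriv f s) p q _
        (h.hff s hs) (h.hft s hs) sft' (h.hfp s hs) (h.hfq s hs)
        (h.htt s hs) stf' (h.htp s hs) (h.htq s hs)
        (h.hunit s hs) (hA3 s hs) (hA2 s hs) h.hpp h.hpq h.hqq
      · rw [hsymm, srf, h.hff s hs, stf]; ring
      · rw [hsymm, srt, h.hft s hs, h.htt s hs]; ring
      · rw [hsymm, srf', sft', stf']; ring
      · rw [hsymm, srp, h.hfp s hs, h.htp s hs]; ring
      · rw [hsymm, srq, h.hfq s hs, h.htq s hs]; ring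
    have hgr : ∀ s ∈ I, (fun u => (-(bB q r)) • f u + (-(bB p r)) • tf u) s = r := by
      intro s hs
      have h2 : (-(bB q r)) • f s + (-(bB p r)) • tf s - r
          = -(r + bB q r • f s + bB p r • tf s) + 0 • f s := by module
      have h3 : (-(bB q r)) • f s + (-(bB p r)) • tf s - r = 0 := by
        rw [h2, hrw s hs, neg_zero, zero_smul, add_zero]
      exact sub_eq_zero.1 h3
    have hdk : ∀ t ∈ I, bB p r * k t = bB q r := by
      intro t ht
      have hgd : HasDerivAt (fun u => (-(bB q r)) • f u + (-(bB p r)) • tf u)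
          ((-(bB q r)) • deriv f t + (-(bB p r)) • deriv tf t) t :=
        ((hfd t ht).const_smul (-(bB q r))).add ((htfd t ht).const_smul (-(bB p r)))
      have h0 := hconstdV _ r _ t ht hgr hgd
      rw [h.htang t ht] at h0
      have h1 : bB ((-(bB q r)) • deriv f t + (-(bB p r)) • (-(k t) • deriv f t))
          (deriv f t) = 0 := by rw [h0, bB_zero_left]
      rw [bB_add_left, bB_smul_left, bB_smul_left, bB_smul_left, h.hunit t ht] at h1
      linarith
    rcases eq_or_ne (bB p r) 0 with hd0 | hd0
    · exfalso
      have he0 : bB q r = 0 := by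
        have h0 := hdk t₀ ht₀
        rw [hd0, zero_mul] at h0
        exact h0.symm
      have h0 := hrw t₀ ht₀
      rw [hd0, he0, zero_smul, zero_smul, add_zero, add_zero] at h0
      exact hr0 h0
    · have hkconst : ∀ s ∈ I, k s = bB q r / bB p r := by
        intro s hs
        rw [eq_div_iff hd0]
        linear_combination hdk s hs
      have hk'z : ∀ t ∈ I, deriv k t = 0 :=
        fun t ht => hconstd k (bB q r / bB p r) _ t ht hkconst (hkd t ht)
      have hk''z : ∀ t ∈ I, deriv (deriv k) t = 0 :=
        fun t ht => hconstd (deriv k) 0 _ t ht hk'z (hk'd t ht)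
      refine ⟨-(χ / 2 * (bB q r / bB p r) ^ 3 + κ * (bB q r / bB p r)), 0, ?_⟩
      intro s hs
      rw [hk''z s hs, hkconst s hs]
      ring
  · -- main case : a = C k with C ≠ 0
    refine ⟨-(bB q r) / C, bB p r / C, ?_⟩
    intro s hs
    have hks := hk s hs
    have hav := haC' s hs
    have hbv : bB (tf s) r = -(k s / 2) * (C * k s) := by
      have h0 := hab s hs
      rw [hav] at h0
      linear_combination h0
    have hE := hfinal s hs
    rw [hav, hbv] at hE
    have hE3 : -κ * (C * k s) + χ * k s * (-(k s / 2) * (C * k s)) - k s * bB p r + bB q r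
        - deriv (deriv k) s * C = 0 := by
      have hfact : k s * (-κ * (C * k s) + χ * k s * (-(k s / 2) * (C * k s))
          - k s * bB p r + bB q r - deriv (deriv k) s * C) = 0 := by
        linear_combination hE
      exact (mul_eq_zero.1 hfact).resolve_left hks
    field_simp
    linear_combination (-2 : ℝ) * hE3
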